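/- arXiv:2211.16573 — 8 statements merged into one kernel-verified Lean document; each statement's English description precedes it below -/
import Mathlib

section
/- Let A be an associative algebra over a field F such that A has countable dimension over F, let S be a simple A-module, and suppose F is uncountable. Then every element of the endomorphism ring End_A(S) is algebraic over F. -/
/-!
By Schur's lemma `End_A(S)` is a division algebra over `F`, and evaluation at a nonzero
`s ∈ S` embeds it `F`-linearly into `S = A • s`, so it has countable dimension. If `θ` were
transcendental, the elements `(θ - a)⁻¹`, `a ∈ F`, would be linearly independent, giving
uncountably many independent vectors.
-/

open Cardinal

theorem Subalgebra.isField_centralizer_centralizer_singleton {F D : Type*} [Field F]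
    [DivisionRing D] [Algebra F D] (x : D) :
    IsField (centralizer F (centralizer F {x} : Set D)) where
  exists_pair_ne := ⟨0, 1, zero_ne_one⟩
  mul_comm a b := Subtype.ext <| Set.centralizer_centralizer_comm_of_comm (by simp) _ a.2 _ b.2
  mul_inv_cancel {a} ha := ⟨⟨(a : D)⁻¹, Set.inv_mem_centralizer₀ a.2⟩,
    Subtype.ext <| mul_inv_cancel₀ <| by simpa using ha⟩

theorem Transcendental.linearIndependent_sub_inv_of_divisionRing {F D : Type*} [Field F]
    [DivisionRing D] [Algebra F D] {x : D} (H : Transcendental F x) :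
    LinearIndependent F fun a ↦ (x - algebraMap F D a)⁻¹ := by
  -- reduce to the field case inside the double centralizer of `x`
  let K := Subalgebra.centralizer F (Subalgebra.centralizer F {x} : Set D)
  let _ : Field K := (Subalgebra.isField_centralizer_centralizer_singleton x).toField
  have hx : x ∈ K := Set.subset_centralizer_centralizer rfl
  have hK : Transcendental F (⟨x, hx⟩ : K) := Subalgebra.transcendental_iff_transcendental_val.2 H
  have hli := hK.linearIndependent_sub_inv.map' K.val.toLinearMap
    (LinearMap.ker_eq_bot.2 Subtype.val_injective)
  have hval : (K.val.toLinearMap ∘ fun a ↦ (⟨x, hx⟩ - algebraMap F K a)⁻¹) =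
      fun a ↦ (x - algebraMap F D a)⁻¹ := by
    ext a
    exact (map_inv₀ K.val _).trans (by simp)
  rwa [hval] at hli

section SimpleModule

universe u v w

variable (F : Type u) (A : Type v) (S : Type w) [Field F] [Ring A] [Algebra F A]
  [AddCommGroup S] [Module A S] [Module F S] [IsScalarTower F A S] [IsSimpleModule A S]

theorem IsSimpleModule.rank_end_le_rank : Module.rank F (Module.End A S) ≤ Module.rank F S := by
  have := IsSimpleModule.nontrivial A S
  obtain ⟨s, hs⟩ := exists_ne (0 : S)
  refine LinearMap.rank_le_of_injective (LinearMap.applyₗ' F s) <|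
    (injective_iff_map_eq_zero _).2 fun f hf ↦ ?_
  by_contra hf0
  exact hs <| LinearMap.injective_of_ne_zero hf0 <| by simpa using hf

theorem IsSimpleModule.lift_rank_le_lift_rank_ring :
    lift.{v} (Module.rank F S) ≤ lift.{w} (Module.rank F A) := by
  have := IsSimpleModule.nontrivial A S
  obtain ⟨s, hs⟩ := exists_ne (0 : S)
  exact ((LinearMap.toSpanSingleton A S s).restrictScalars F).lift_rank_le_of_surjective
    (IsSimpleModule.toSpanSingleton_surjective A hs)

end SimpleModule

/-- If `F` is an uncountable field, `A` an associative unital `F`-algebra of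
countable dimension over `F`, and `S` a simple left `A`-module, then every element of
`End_A(S)` is algebraic over `F`. -/
theorem stmt_0 (F : Type*) [Field F] [Uncountable F]
    (A : Type*) [Ring A] [Algebra F A]
    (hdim : Module.rank F A ≤ Cardinal.aleph0)
    (S : Type*) [AddCommGroup S] [Module A S] [Module F S] [IsScalarTower F A S]
    [IsSimpleModule A S]
    (θ : Module.End A S) : IsAlgebraic F θ := by
  classical -- the division ring structure on `Module.End A S` needs `DecidableEq`
  by_contra hθ
  change Transcendental F θ at hθ
  have hF := (Transcendental.linearIndependent_sub_inv_of_divisionRing hθ).cardinal_lift_le_rank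
  have hS : Module.rank F S ≤ ℵ₀ :=
    lift_le_aleph0.1 ((IsSimpleModule.lift_rank_le_lift_rank_ring F A S).trans
      (lift_le_aleph0.2 hdim))
  have hE : Module.rank F (Module.End A S) ≤ ℵ₀ := (IsSimpleModule.rank_end_le_rank F A S).trans hS
  exact not_countable (mk_le_aleph0_iff.1 (lift_le_aleph0.1 (hF.trans (lift_le_aleph0.2 hE))))
end

section
/- Let θ be an endomorphism of a nonzero simple module S over an F-algebra A. If θ is not algebraic over F, then the elements (θ − λ)⁻¹ for λ ∈ F are F-linearly independent in End_A(S), and hence dim_F(S) ≥ card(F). -/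
/-!
Multiplying a linear relation `∑ gᵢ (θ - λᵢ)⁻¹ = 0` by `∏ⱼ (θ - λⱼ)` gives a polynomial relation
`∑ gᵢ ∏_{j ≠ i} (θ - λⱼ) = 0`; as `θ` is transcendental the polynomial vanishes, and evaluating it
at `λᵢ` leaves `gᵢ ∏_{j ≠ i} (λᵢ - λⱼ) = 0`. Schur's lemma makes every `θ - λ` invertible, and
evaluation at a nonzero vector embeds `End_A(S)` `F`-linearly into `S`.
-/

open Polynomial Lagrange

theorem Lagrange.eq_zero_of_sum_smul_nodal_erase_eq_zero {R : Type*} [CommRing R] [IsDomain R]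
    [DecidableEq R] {s : Finset R} {g : R → R}
    (h : ∑ j ∈ s, g j • nodal (s.erase j) id = 0) {i : R} (hi : i ∈ s) : g i = 0 := by
  have heval := congrArg (eval i) h
  simp only [eval_finsetSum, eval_smul, smul_eq_mul, eval_zero] at heval
  have hsingle : ∑ j ∈ s, g j * eval i (nodal (s.erase j) id) =
      g i * eval i (nodal (s.erase i) id) :=
    Finset.sum_eq_single_of_mem i hi fun j _ hji =>
      mul_eq_zero_of_right _ (eval_nodal_at_node (v := id) (Finset.mem_erase.mpr ⟨hji.symm, hi⟩))
  rw [hsingle] at heval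
  refine (mul_eq_zero.mp heval).resolve_right (eval_nodal_not_at_node fun j hj => ?_)
  exact (Finset.ne_of_mem_erase hj).symm

section

variable {F E : Type*} [Field F] [Ring E] [Algebra F E]

theorem aeval_nodal_mul_ringInverse_sub [DecidableEq F] {x : E} {s : Finset F} {a : F}
    (ha : a ∈ s) (hunit : IsUnit (x - algebraMap F E a)) :
    aeval x (nodal s id) * Ring.inverse (x - algebraMap F E a) =
      aeval x (nodal (s.erase a) id) := by
  have hX : aeval x (X - C a) = x - algebraMap F E a := by simp
  rw [nodal_eq_mul_nodal_erase ha, mul_comm, map_mul, id, hX, mul_assoc,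
    Ring.mul_inverse_cancel _ hunit, mul_one]

theorem Transcendental.linearIndependent_ringInverse_sub {x : E} (hx : Transcendental F x)
    (hunit : ∀ a : F, IsUnit (x - algebraMap F E a)) :
    LinearIndependent F fun a : F => Ring.inverse (x - algebraMap F E a) := by
  classical
  refine linearIndependent_iff'.mpr fun s g hsum i hi => ?_
  have hrel : Polynomial.aeval x (∑ j ∈ s, g j • nodal (s.erase j) id) = 0 := by
    rw [← mul_zero (Polynomial.aeval x (nodal s id)), ← hsum, Finset.mul_sum, map_sum]
    refine Finset.sum_congr rfl fun j hj => ?_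
    rw [mul_smul_comm, aeval_nodal_mul_ringInverse_sub hj (hunit j), map_smul]
  exact eq_zero_of_sum_smul_nodal_erase_eq_zero (transcendental_iff.mp hx _ hrel) hi

theorem Transcendental.sub_algebraMap_ne_zero {x : E} (hx : Transcendental F x) (a : F) :
    x - algebraMap F E a ≠ 0 :=
  fun h => hx (sub_eq_zero.mp h ▸ isAlgebraic_algebraMap a)

end

section

variable {A S : Type*} [Ring A] [AddCommGroup S] [Module A S] [IsSimpleModule A S]

theorem Module.End.isUnit_of_ne_zero {f : Module.End A S} (hf : f ≠ 0) : IsUnit f :=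
  (Module.End.isUnit_iff f).mpr (LinearMap.bijective_of_ne_zero hf)

theorem Module.End.eq_zero_of_apply_eq_zero {f : Module.End A S} {v : S} (hv : v ≠ 0)
    (hfv : f v = 0) : f = 0 :=
  not_not.mp fun hf => hv ((LinearMap.injective_of_ne_zero hf) (hfv.trans f.map_zero.symm))

end

theorem stmt_1_general (F : Type u_1) [Field F]
    (A : Type u_2) [Ring A] [Algebra F A]
    (S : Type u_3) [AddCommGroup S] [Module A S] [Module F S]
    [IsScalarTower F A S] [IsSimpleModule A S]
    (θ : Module.End A S) (hθ : ¬ IsAlgebraic F θ) :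
    LinearIndependent F
        (fun lam : F => Ring.inverse (θ - algebraMap F (Module.End A S) lam)) ∧
      Cardinal.lift.{u_3} (Cardinal.mk F) ≤ Cardinal.lift.{u_1} (Module.rank F S) := by
  have hli := Transcendental.linearIndependent_ringInverse_sub hθ fun a =>
    Module.End.isUnit_of_ne_zero (Transcendental.sub_algebraMap_ne_zero hθ a)
  refine ⟨hli, ?_⟩
  have := IsSimpleModule.nontrivial A S
  obtain ⟨v, hv⟩ := exists_ne (0 : S)
  have heval : LinearMap.ker (LinearMap.applyₗ' F v : Module.End A S →ₗ[F] S) = ⊥ :=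
    LinearMap.ker_eq_bot'.mpr fun f => Module.End.eq_zero_of_apply_eq_zero hv
  exact (hli.map' _ heval).cardinal_lift_le_rank

/-- If `θ` is an endomorphism of a nonzero simple `A`-module `S` which is not
algebraic over `F`, then the elements `(θ - λ)⁻¹` for `λ ∈ F` are `F`-linearly independent
in `End_A(S)`, and hence `dim_F S ≥ card F`. -/
theorem stmt_1 (F : Type u_1) [Field F]
    (A : Type u_2) [Ring A] [Algebra F A]
    (S : Type u_3) [AddCommGroup S] [Nontrivial S] [Module A S] [Module F S]
    [IsScalarTower F A S] [IsSimpleModule A S]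
    (θ : Module.End A S) (hθ : ¬ IsAlgebraic F θ) :
    LinearIndependent F
        (fun lam : F => Ring.inverse (θ - algebraMap F (Module.End A S) lam)) ∧
      Cardinal.lift.{u_3} (Cardinal.mk F) ≤ Cardinal.lift.{u_1} (Module.rank F S) :=
  stmt_1_general F A S θ hθ
end

section
/- Let D be a division ring with center K containing a maximal subfield E. If dim_K(E) is finite, then dim_E(D) is finite and dim_K(D) is finite. -/
/-!
Let `Dᵐᵒᵖ ⊗[K] E` act on `D` by `(a ⊗ e) • x = e * x * a`. Then `D` is a simple module whose
endomorphisms are left multiplications by elements of the centralizer of `E`, and that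
centralizer is `E` itself by maximality. By Jacobson density, for `E`-linearly independent
`x₁, …, xₘ` there are `rᵢ` with `rᵢ • xⱼ = δᵢⱼ`; these are `Dᵐᵒᵖ`-linearly independent in
`Dᵐᵒᵖ ⊗[K] E`, which is free of rank `[E : K]` over `Dᵐᵒᵖ`. Hence `[D : E] ≤ [E : K]`.
-/

section

open TensorProduct MulOpposite

variable {K D : Type*} [Field K] [DivisionRing D] [Algebra K D]

theorem LinearIndependent.exists_linearMap_apply_eq {F V W ι : Type*} [DivisionRing F]
    [AddCommGroup V] [Module F V] [AddCommGroup W] [Module F W] [Fintype ι] [DecidableEq ι]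
    {x : ι → V} (hx : LinearIndependent F x) (y : ι → W) :
    ∃ g : V →ₗ[F] W, ∀ i, g (x i) = y i := by
  obtain ⟨ℓ, hℓ⟩ := LinearMap.exists_leftInverse_of_injective (Fintype.linearCombination F x)
    (LinearMap.ker_eq_bot.mpr (linearIndependent_iff_injective_fintypeLinearCombination.mp hx))
  refine ⟨Fintype.linearCombination F y ∘ₗ ℓ, fun i => ?_⟩
  have hxi : ℓ (x i) = Pi.single i 1 := by
    simpa using LinearMap.congr_fun hℓ (Pi.single i 1)
  simp [hxi]

theorem Subalgebra.isUnit_or_eq_zero_of_inv_mem {E : Subalgebra K D}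
    (hEinv : ∀ x ∈ E, x⁻¹ ∈ E) (a : E) : IsUnit a ∨ a = 0 := by
  refine or_iff_not_imp_right.mpr fun ha => ?_
  have ha' : (a : D) ≠ 0 := fun h => ha (Subtype.ext h)
  exact ⟨⟨a, ⟨_, hEinv a a.2⟩, Subtype.ext (mul_inv_cancel₀ ha'),
    Subtype.ext (inv_mul_cancel₀ ha')⟩, rfl⟩

theorem Subalgebra.centralizer_subset_of_maximal {E : Subalgebra K D}
    (hEcomm : ∀ x ∈ E, ∀ y ∈ E, x * y = y * x)
    (hEmax : ∀ E' : Subalgebra K D, (∀ x ∈ E', ∀ y ∈ E', x * y = y * x) →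
      (∀ x ∈ E', x⁻¹ ∈ E') → E ≤ E' → E' = E) :
    Set.centralizer (E : Set D) ⊆ E := by
  intro x hx
  let S := insert x (E : Set D)
  have hS : ∀ a ∈ S, ∀ b ∈ S, a * b = b * a := by
    rintro a (rfl | ha) b (rfl | hb)
    · rfl
    · exact (hx b hb).symm
    · exact hx a ha
    · exact hEcomm a ha b hb
  have hE' : Subalgebra.centralizer K (Set.centralizer S) = E :=
    hEmax _ (Set.centralizer_centralizer_comm_of_comm hS) (fun a => Set.inv_mem_centralizer₀)
      fun a ha => Set.subset_centralizer_centralizer (Set.mem_insert_of_mem x ha)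
  exact hE' ▸ Set.subset_centralizer_centralizer (Set.mem_insert x _)

attribute [local instance] TensorProduct.Algebra.module

instance TensorProduct.Algebra.isScalarTower_left {R A B M : Type*} [CommSemiring R]
    [AddCommMonoid M] [Module R M] [Semiring A] [Semiring B] [Module A M] [Module B M]
    [Algebra R A] [Algebra R B] [IsScalarTower R A M] [IsScalarTower R B M]
    [SMulCommClass A B M] : IsScalarTower A (A ⊗[R] B) M where
  smul_assoc a t m := by
    induction t using TensorProduct.induction_on with
    | zero => simp
    | tmul a' b => simp only [smul_tmul', smul_def, smul_eq_mul, mul_smul]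
    | add t₁ t₂ h₁ h₂ => simp only [smul_add, add_smul, h₁, h₂]

section

variable {A : Type*} [Ring A] [Algebra K A] [Module A D] [IsScalarTower K A D]
  [SMulCommClass Dᵐᵒᵖ A D]

theorem card_le_finrank_of_forall_exists_smul_eq_ite [Module.Finite K A]
    {ι : Type*} [Fintype ι] [DecidableEq ι] (x : ι → D)
    (h : ∀ i, ∃ r : Dᵐᵒᵖ ⊗[K] A, ∀ j, r • x j = if j = i then 1 else 0) :
    Fintype.card ι ≤ Module.finrank K A := by
  choose r hr using h
  have hind : LinearIndependent Dᵐᵒᵖ r := by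
    refine Fintype.linearIndependent_iff.mpr fun c hc i => ?_
    -- `simp` does not identify the additive `0` of the tensor product with its ring `0`
    have h0 : (0 : Dᵐᵒᵖ ⊗[K] A) • x i = 0 := zero_smul (Dᵐᵒᵖ ⊗[K] A) (x i)
    have := congrArg (· • x i) hc
    simpa [h0, Finset.sum_smul, smul_assoc, hr] using this
  simpa using hind.fintype_card_le_finrank

end

namespace Subalgebra

variable (E : Subalgebra K D)

theorem tmul_smul (a : Dᵐᵒᵖ) (e : E) (x : D) : (a ⊗ₜ[K] e) • x = e * x * a.unop := rfl

instance : IsSimpleModule (Dᵐᵒᵖ ⊗[K] E) D := by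
  refine isSimpleModule_iff_toSpanSingleton_surjective.mpr ⟨inferInstance, fun x hx y => ?_⟩
  refine ⟨op (x⁻¹ * y) ⊗ₜ 1, ?_⟩
  simp [tmul_smul, ← mul_assoc, mul_inv_cancel₀ hx]

variable {E}

theorem end_apply_eq_mul (φ : Module.End (Dᵐᵒᵖ ⊗[K] E) D) (x : D) : φ x = φ 1 * x := by
  simpa [tmul_smul] using φ.map_smul (op x ⊗ₜ 1) 1

theorem end_apply_one_mem_centralizer (φ : Module.End (Dᵐᵒᵖ ⊗[K] E) D) :
    φ 1 ∈ Set.centralizer (E : Set D) := by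
  intro e he
  have := φ.map_smul (1 ⊗ₜ ⟨e, he⟩) 1
  simp only [tmul_smul, mul_one, unop_one] at this
  rw [← this, end_apply_eq_mul]

def endEndOfLinearMap (hE : Set.centralizer (E : Set D) ⊆ E) (g : D →ₗ[E] D) :
    Module.End (Module.End (Dᵐᵒᵖ ⊗[K] E) D) D where
  toFun := g
  map_add' := g.map_add
  map_smul' φ x := by
    simp only [Module.End.smul_def, RingHom.id_apply]
    rw [end_apply_eq_mul, end_apply_eq_mul φ (g x)]
    exact g.map_smul ⟨φ 1, hE (end_apply_one_mem_centralizer φ)⟩ x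

theorem exists_smul_eq_apply (hE : Set.centralizer (E : Set D) ⊆ E) (g : D →ₗ[E] D)
    (s : Finset D) : ∃ r : Dᵐᵒᵖ ⊗[K] E, ∀ x ∈ s, r • x = g x := by
  obtain ⟨r, hr⟩ := jacobson_density (endEndOfLinearMap hE g) s
  exact ⟨r, fun x hx => (hr x hx).symm⟩

theorem finite_of_centralizer_subset (hEinv : ∀ x ∈ E, x⁻¹ ∈ E)
    (hE : Set.centralizer (E : Set D) ⊆ E) [FiniteDimensional K E] : Module.Finite E D := by
  let := DivisionRing.ofIsUnitOrEqZero (isUnit_or_eq_zero_of_inv_mem hEinv)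
  classical
  have hrank : Module.rank E D ≤ Module.finrank K E := by
    refine rank_le fun s hs => ?_
    have hdelta (i : s) : ∃ r : Dᵐᵒᵖ ⊗[K] E, ∀ j : s, r • (j : D) = if j = i then 1 else 0 := by
      obtain ⟨g, hg⟩ := hs.exists_linearMap_apply_eq fun j : s => if j = i then (1 : D) else 0
      obtain ⟨r, hr⟩ := exists_smul_eq_apply hE g s
      exact ⟨r, fun j => (hr j j.2).trans (hg j)⟩
    simpa using card_le_finrank_of_forall_exists_smul_eq_ite _ hdelta
  exact Module.rank_lt_aleph0_iff.mp (hrank.trans_lt Cardinal.natCast_lt_aleph0)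

end Subalgebra

end

theorem stmt_10_general (K : Type*) [Field K] (D : Type*) [DivisionRing D] [Algebra K D]
    (E : Subalgebra K D)
    (hEcomm : ∀ x ∈ E, ∀ y ∈ E, x * y = y * x)
    (hEinv : ∀ x ∈ E, x⁻¹ ∈ E)
    (hEmax : ∀ E' : Subalgebra K D, (∀ x ∈ E', ∀ y ∈ E', x * y = y * x) →
      (∀ x ∈ E', x⁻¹ ∈ E') → E ≤ E' → E' = E)
    (hfin : FiniteDimensional K E) :
    Module.Finite E D ∧ FiniteDimensional K D := by
  have hED : Module.Finite E D :=
    E.finite_of_centralizer_subset hEinv (E.centralizer_subset_of_maximal hEcomm hEmax)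
  exact ⟨hED, Module.Finite.trans E D⟩

/-- Let `D` be a division ring with center `K` (realized via an algebra map
`K → D` whose range is exactly the center) and `E` a maximal subfield of `D` (a commutative
subalgebra closed under inverses, maximal among such). If `dim_K E` is finite, then
`dim_E D` and `dim_K D` are finite. -/
theorem stmt_10 (K : Type*) [Field K] (D : Type*) [DivisionRing D] [Algebra K D]
    (hcenter : ∀ x : D, x ∈ Subring.center D ↔ x ∈ (algebraMap K D).range)
    (E : Subalgebra K D)
    (hEcomm : ∀ x ∈ E, ∀ y ∈ E, x * y = y * x)
    (hEinv : ∀ x ∈ E, x⁻¹ ∈ E)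
    (hEmax : ∀ E' : Subalgebra K D, (∀ x ∈ E', ∀ y ∈ E', x * y = y * x) →
      (∀ x ∈ E', x⁻¹ ∈ E') → E ≤ E' → E' = E)
    (hfin : FiniteDimensional K E) :
    Module.Finite E D ∧ FiniteDimensional K D :=
  stmt_10_general K D E hEcomm hEinv hEmax hfin
end

section
/- Let A be an associative algebra over a field F and S a simple A-module such that End_A(S) = F·id. Then for any field extension K/F, the K ⊗_F A-module K ⊗_F S is simple. -/
/-!
By Jacobson density, `End_A S = F · id` makes every `F`-linear endomorphism `f` of `S` agree with
the action of some `a ∈ A` on any finite subset of `S`, so `1 ⊗ a` acts on a given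
`x ∈ K ⊗[F] S` as `id_K ⊗ f`. Choosing `f = (i-th coordinate) · u` for a basis coordinate `i`
in which `x` has a nonzero coefficient `c ∈ K` turns `x` into `c ⊗ u`; rescaling by `K ⊗ 1`
shows that every nonzero submodule contains all pure tensors.
-/

open TensorProduct

section BaseChangeModule

variable {F : Type*} [Field F] {A : Type*} [Ring A] [Algebra F A]
  {K : Type*} [Field K] [Algebra F K]
  {S : Type*} [AddCommGroup S] [Module A S] [Module F S] [IsScalarTower F A S]

lemma isScalarTower_F_K : IsScalarTower F K (K ⊗[F] S) where
  smul_assoc f k x := by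
    induction x using TensorProduct.induction_on with
    | zero =>
        rw [smul_zero, smul_zero]
        exact (smul_zero f).symm
    | tmul l s => rw [smul_tmul', smul_tmul', smul_tmul', smul_assoc]
    | add x y hx hy => simp only [smul_add, hx, hy]

/-- The action of `A` on `K ⊗[F] S` by `a • (l ⊗ s) = l ⊗ (a • s)`, as an algebra morphism
into the `F`-linear endomorphisms of `K ⊗[F] S`. -/
noncomputable def actionA : A →ₐ[F] Module.End F (K ⊗[F] S) where
  toFun a := LinearMap.lTensor K (Algebra.lsmul F F S a)
  map_one' := by
    show LinearMap.lTensor K ((Algebra.lsmul F F S) 1) = 1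
    rw [map_one]
    exact LinearMap.lTensor_id K S
  map_mul' a b := by
    show LinearMap.lTensor K ((Algebra.lsmul F F S) (a * b)) = _
    rw [map_mul]
    exact LinearMap.lTensor_comp K _ _
  map_zero' := by
    show LinearMap.lTensor K ((Algebra.lsmul F F S) 0) = 0
    rw [map_zero]
    exact LinearMap.lTensor_zero K
  map_add' a b := by
    show LinearMap.lTensor K ((Algebra.lsmul F F S) (a + b)) = _
    rw [map_add]
    exact LinearMap.lTensor_add K _ _
  commutes' f := by
    show LinearMap.lTensor K ((Algebra.lsmul F F S) (algebraMap F A f))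
        = algebraMap F (Module.End F (K ⊗[F] S)) f
    rw [AlgHom.commutes, Module.algebraMap_end_eq_smul_id, Module.algebraMap_end_eq_smul_id,
      LinearMap.lTensor_smul, LinearMap.lTensor_id]

lemma actionA_comm (k : K) (a : A) (x : K ⊗[F] S) :
    k • actionA (F := F) (K := K) a x = actionA (F := F) (K := K) a (k • x) := by
  induction x using TensorProduct.induction_on with
  | zero => simp only [map_zero, smul_zero]
  | tmul l s => rfl
  | add x y hx hy => simp only [map_add, smul_add, hx, hy]

/-- The representation of `K ⊗[F] A` on `K ⊗[F] S` given by
`(k ⊗ a) ↦ (l ⊗ s ↦ (k * l) ⊗ (a • s))`. -/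
noncomputable def baseChangeHom : (K ⊗[F] A) →ₐ[F] Module.End F (K ⊗[F] S) :=
  letI : IsScalarTower F K (K ⊗[F] S) := isScalarTower_F_K
  Algebra.TensorProduct.lift (Algebra.lsmul F F (K ⊗[F] S)) actionA
    (fun k a => show Commute _ _ from LinearMap.ext fun x => actionA_comm k a x)

/-- The natural module structure of `K ⊗[F] A` on `K ⊗[F] S`, with
`(k ⊗ a) • (l ⊗ s) = (k * l) ⊗ (a • s)`. -/
noncomputable def baseChangeModule (F : Type*) [Field F] (A : Type*) [Ring A] [Algebra F A]
    (K : Type*) [Field K] [Algebra F K]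
    (S : Type*) [AddCommGroup S] [Module A S] [Module F S] [IsScalarTower F A S] :
    Module (K ⊗[F] A) (K ⊗[F] S) :=
  Module.compHom _ (baseChangeHom (F := F) (A := A) (K := K) (S := S)).toRingHom

lemma baseChangeModule_smul_tmul (k l : K) (a : A) (s : S) :
    letI := baseChangeModule F A K S
    (k ⊗ₜ[F] a : K ⊗[F] A) • (l ⊗ₜ[F] s : K ⊗[F] S) = (k * l) ⊗ₜ[F] (a • s) := by
  show (baseChangeHom (F := F) (A := A) (K := K) (S := S) (k ⊗ₜ[F] a)) (l ⊗ₜ[F] s)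
      = (k * l) ⊗ₜ[F] (a • s)
  rw [baseChangeHom, Algebra.TensorProduct.lift_tmul]
  rfl

end BaseChangeModule

attribute [local instance] baseChangeModule

theorem Module.Basis.lTensor_coord_smulRight {R M N ι : Type*} [CommSemiring R]
    [AddCommMonoid M] [Module R M] [AddCommMonoid N] [Module R N]
    (K : Type*) [Semiring K] [Algebra R K] (b : Module.Basis ι R M) (i : ι) (u : N)
    (x : K ⊗[R] M) :
    LinearMap.lTensor K ((b.coord i).smulRight u) x = (b.baseChange K).repr x i ⊗ₜ u := by
  induction x using TensorProduct.induction_on with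
  | zero => simp
  | tmul k m => simp [TensorProduct.smul_tmul]
  | add x y hx hy => simp [hx, hy, TensorProduct.add_tmul]

section SimpleBaseChange

variable {F A K S : Type*} [Field F] [Ring A] [Algebra F A] [Field K] [Algebra F K]
  [AddCommGroup S] [Module A S] [Module F S] [IsScalarTower F A S]

/-- An `F`-linear map commuting with every scalar commutes with `End_A S = F · id`, so Jacobson
density applies to it. -/
theorem exists_smul_eq_of_forall_end_eq_smul_id [IsSemisimpleModule A S]
    (hend : ∀ f : Module.End A S, ∃ c : F, f = c • (LinearMap.id : S →ₗ[A] S))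
    (f : S →ₗ[F] S) (s : Finset S) : ∃ a : A, ∀ m ∈ s, a • m = f m := by
  let g : Module.End (Module.End A S) S :=
    { toFun := f
      map_add' := f.map_add
      map_smul' := fun e m => by
        obtain ⟨c, rfl⟩ := hend e
        exact f.map_smul c m }
  obtain ⟨a, ha⟩ := jacobson_density g s
  exact ⟨a, fun m hm => (ha m hm).symm⟩

theorem exists_one_tmul_smul_eq_lTensor [IsSemisimpleModule A S]
    (hend : ∀ f : Module.End A S, ∃ c : F, f = c • (LinearMap.id : S →ₗ[A] S))
    (f : S →ₗ[F] S) (x : K ⊗[F] S) :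
    ∃ a : A, ((1 : K) ⊗ₜ[F] a) • x = LinearMap.lTensor K f x := by
  classical
  obtain ⟨T, rfl⟩ := TensorProduct.exists_finset x
  obtain ⟨a, ha⟩ := exists_smul_eq_of_forall_end_eq_smul_id hend f (T.image Prod.snd)
  refine ⟨a, ?_⟩
  simp only [Finset.smul_sum, map_sum, baseChangeModule_smul_tmul, one_mul,
    LinearMap.lTensor_tmul]
  exact Finset.sum_congr rfl fun t ht => by rw [ha _ (Finset.mem_image_of_mem _ ht)]

theorem tmul_mem_of_ne_zero [IsSemisimpleModule A S]
    (hend : ∀ f : Module.End A S, ∃ c : F, f = c • (LinearMap.id : S →ₗ[A] S))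
    (N : Submodule (K ⊗[F] A) (K ⊗[F] S)) {x : K ⊗[F] S} (hxN : x ∈ N) (hx : x ≠ 0)
    (k : K) (u : S) : k ⊗ₜ[F] u ∈ N := by
  let b := Module.Basis.ofVectorSpace F S
  obtain ⟨i, hi⟩ : ∃ i, (b.baseChange K).repr x i ≠ 0 := by
    by_contra! h
    exact hx ((b.baseChange K).repr.map_eq_zero_iff.mp (Finsupp.ext h))
  obtain ⟨a, ha⟩ := exists_one_tmul_smul_eq_lTensor hend ((b.coord i).smulRight u) x
  rw [Module.Basis.lTensor_coord_smulRight] at ha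
  have hcu : (b.baseChange K).repr x i ⊗ₜ[F] u ∈ N := ha ▸ N.smul_mem _ hxN
  have := N.smul_mem ((k * ((b.baseChange K).repr x i)⁻¹) ⊗ₜ[F] (1 : A)) hcu
  rwa [baseChangeModule_smul_tmul, one_smul, mul_assoc, inv_mul_cancel₀ hi, mul_one] at this

end SimpleBaseChange

/-- Let `A` be an `F`-algebra and `S` a simple `A`-module with
`End_A S = F · id`. Then for any field extension `K/F`, the `K ⊗[F] A`-module `K ⊗[F] S`
(with the natural action `(k ⊗ a) • (l ⊗ s) = (k l) ⊗ (a s)`) is simple. -/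
theorem stmt_12 (F : Type*) [Field F] (A : Type*) [Ring A] [Algebra F A]
    (S : Type*) [AddCommGroup S] [Module A S] [Module F S] [IsScalarTower F A S]
    [IsSimpleModule A S]
    (hend : ∀ f : Module.End A S, ∃ c : F, f = c • (LinearMap.id : S →ₗ[A] S))
    (K : Type*) [Field K] [Algebra F K] :
    letI := baseChangeModule F A K S
    IsSimpleModule (K ⊗[F] A) (K ⊗[F] S) := by
  have : Nontrivial S := IsSimpleModule.nontrivial A S
  refine (isSimpleModule_iff _ _).mpr ⟨fun N => or_iff_not_imp_left.mpr fun hN => ?_⟩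
  obtain ⟨x, hxN, hx⟩ := N.ne_bot_iff.mp hN
  refine N.eq_top_iff'.mpr fun z => ?_
  induction z using TensorProduct.induction_on with
  | zero => exact N.zero_mem
  | tmul k u => exact tmul_mem_of_ne_zero hend N hxN hx k u
  | add y z hy hz => exact N.add_mem hy hz
end

section
/- Let F be a field and let S be a simple module over the polynomial ring F[x₁,…,xₙ]. Then S is finite-dimensional over F. -/
/-- A simple module is `R ⧸ m` for a maximal ideal `m`; this residue field is finitely generated
over `K`, hence module-finite by Zariski's lemma for Jacobson rings. -/
theorem IsSimpleModule.finite_of_finiteType_of_isJacobsonRing {K R S : Type*} [CommRing K]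
    [IsJacobsonRing K] [CommRing R] [Algebra K R] [Algebra.FiniteType K R]
    [AddCommGroup S] [Module R S] [Module K S] [IsScalarTower K R S] [IsSimpleModule R S] :
    Module.Finite K S := by
  obtain ⟨m, _, ⟨e⟩⟩ := isSimpleModule_iff_quot_maximal.mp ‹IsSimpleModule R S›
  let := Ideal.Quotient.field m
  have : Algebra.FiniteType K (R ⧸ m) := .trans ‹_› inferInstance
  have : Module.Finite K (R ⧸ m) := finite_of_finite_type_of_isJacobsonRing K (R ⧸ m)
  exact .equiv (e.restrictScalars K).symm

/-- Every simple module over the polynomial ring `F[x₁, …, xₙ]` over a field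
`F` is finite-dimensional over `F`. -/
theorem stmt_15 (F : Type*) [Field F] (n : ℕ)
    (S : Type*) [AddCommGroup S] [Module (MvPolynomial (Fin n) F) S] [Module F S]
    [IsScalarTower F (MvPolynomial (Fin n) F) S]
    [IsSimpleModule (MvPolynomial (Fin n) F) S] :
    FiniteDimensional F S :=
  IsSimpleModule.finite_of_finiteType_of_isJacobsonRing (R := MvPolynomial (Fin n) F)
end

section
/- Let A be an associative algebra over a field F, S a simple A-module such that End_A(S) is a field K (viewed as containing F). If θ ∈ End_A(S) is such that K = F(θ) and θ is transcendental over F, then dim_F(S) ≥ card(F). -/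
universe u v

/-! Since `K = End_A(S)` is a field containing the transcendental `θ`, the elements
`(θ - a)⁻¹`, `a ∈ F`, are `F`-linearly independent in `K`, so `dim_F K ≥ card F`. Evaluation
at a nonzero vector embeds `K` into `S`, because a nonzero endomorphism of a simple module is
injective; hence `dim_F S ≥ dim_F K`. -/

open Cardinal

theorem Transcendental.lift_cardinalMk_le_rank {F : Type u} {E : Type v} [Field F] [Field E]
    [Algebra F E] {x : E} (hx : Transcendental F x) : lift.{v} #F ≤ lift.{u} (Module.rank F E) :=
  hx.linearIndependent_sub_inv.cardinal_lift_le_rank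

theorem IsSimpleModule.injective_applyₗ' {F A S : Type*} [CommSemiring F] [Ring A]
    [AddCommGroup S] [Module A S] [Module F S] [SMulCommClass A F S] [IsSimpleModule A S]
    {s : S} (hs : s ≠ 0) : Function.Injective (LinearMap.applyₗ' F s : Module.End A S →ₗ[F] S) := by
  refine (injective_iff_map_eq_zero _).2 fun f hf => ?_
  by_contra hf0
  exact hs ((LinearMap.bijective_of_ne_zero hf0).1 (hf.trans (map_zero f).symm))

theorem IsSimpleModule.rank_end_le {F A S : Type*} [CommSemiring F] [Ring A]
    [AddCommGroup S] [Module A S] [Module F S] [SMulCommClass A F S] [IsSimpleModule A S] :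
    Module.rank F (Module.End A S) ≤ Module.rank F S := by
  have := IsSimpleModule.nontrivial A S
  obtain ⟨s, hs⟩ := exists_ne (0 : S)
  exact LinearMap.rank_le_of_injective _ (injective_applyₗ' hs)

theorem stmt_16_general (F : Type u) [Field F] (A : Type*) [Ring A] [Algebra F A]
    (S : Type v) [AddCommGroup S] [Module A S] [Module F S]
    [IsScalarTower F A S] [IsSimpleModule A S]
    (θ : Module.End A S)
    (hcomm : ∀ f g : Module.End A S, f * g = g * f)
    (htrans : Transcendental F θ) :
    Cardinal.lift.{v} (Cardinal.mk F) ≤ Cardinal.lift.{u} (Module.rank F S) := by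
  classical
  let _ : Field (Module.End A S) := { (inferInstance : DivisionRing _) with mul_comm := hcomm }
  exact htrans.lift_cardinalMk_le_rank.trans (lift_le.2 IsSimpleModule.rank_end_le)

/-- Let `A` be an `F`-algebra and `S` a nonzero simple `A`-module whose
endomorphism ring is a (commutative) field `K = F(θ)` generated over `F` by a single
element `θ` that is transcendental over `F`. Then `dim_F S ≥ card F`. -/
theorem stmt_16 (F : Type u) [Field F] (A : Type*) [Ring A] [Algebra F A]
    (S : Type v) [AddCommGroup S] [Nontrivial S] [Module A S] [Module F S]
    [IsScalarTower F A S] [IsSimpleModule A S]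
    (θ : Module.End A S)
    (hcomm : ∀ f g : Module.End A S, f * g = g * f)
    (hgen : ∀ f : Module.End A S, ∃ p q : Polynomial F,
      Polynomial.aeval θ q ≠ 0 ∧ f * Polynomial.aeval θ q = Polynomial.aeval θ p)
    (htrans : Transcendental F θ) :
    Cardinal.lift.{v} (Cardinal.mk F) ≤ Cardinal.lift.{u} (Module.rank F S) :=
  stmt_16_general F A S θ hcomm htrans
end

section
/- Let D be a division algebra over a field F such that every element of D is algebraic over F, and suppose D contains a maximal subfield E that is a finitely generated field extension of F. Then D is finite-dimensional over F. -/
/-!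
Let `A = D ⊗[F] Bᵐᵒᵖ` act on `D` by `(d ⊗ b) • x = d * x * b`. Left multiplications already make
`D` a simple `A`-module, and an `A`-linear endomorphism of `D` is right multiplication by an
element of the centralizer `C` of `B`; so `K = End_A D` is a division ring by Schur's lemma. By
Jacobson density, for `K`-linearly independent `x₁, …, xₘ` the `D`-linear evaluation
`A → Dᵐ, a ↦ (a • xᵢ)ᵢ` is onto, whence `m ≤ dim_D A = dim_F B`. Thus `D = ∑ K xᵢ = ∑ xᵢ C` for
finitely many `xᵢ`, which is finite-dimensional over `F` when `B` and `C` are.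
A maximal subfield `E` is its own centralizer, and it is finite over `F` because it is generated
by finitely many algebraic elements.
-/

open TensorProduct
open scoped IsMulCommutative

namespace Subalgebra

theorem centralizer_eq_self_of_maximal_commutative {R A : Type*} [CommSemiring R] [Semiring A]
    [Algebra R A] {E : Subalgebra R A}
    (hEcomm : ∀ x ∈ E, ∀ y ∈ E, x * y = y * x)
    (hEmax : ∀ E' : Subalgebra R A, (∀ x ∈ E', ∀ y ∈ E', x * y = y * x) → E ≤ E' → E' = E) :
    centralizer R (E : Set A) = E := by
  refine le_antisymm (fun c hc => ?_) fun x hx =>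
    (mem_centralizer_iff R).mpr fun y hy => hEcomm y hy x hx
  rw [mem_centralizer_iff] at hc
  have hcomm : ∀ x ∈ insert c (E : Set A), ∀ y ∈ insert c (E : Set A), x * y = y * x := by
    rintro x (rfl | hx) y (rfl | hy)
    · rfl
    · exact (hc y hy).symm
    · exact hc x hx
    · exact hEcomm x hx y hy
  have := Algebra.isMulCommutative_adjoin R hcomm
  have hE : Algebra.adjoin R (insert c (E : Set A)) = E :=
    hEmax _ (fun x hx y hy => congrArg Subtype.val (mul_comm (⟨x, hx⟩ : Algebra.adjoin R _) ⟨y, hy⟩))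
      ((Set.subset_insert c _).trans Algebra.subset_adjoin)
  exact hE ▸ Algebra.subset_adjoin (Set.mem_insert c _)

theorem finite_of_fg_of_isIntegral {R A : Type*} [CommRing R] [Ring A] [Algebra R A]
    {S : Subalgebra R A} [IsMulCommutative S] (hfg : S.FG) (hint : ∀ x ∈ S, IsIntegral R x) :
    Module.Finite R S := by
  have : Algebra.FiniteType R S := S.fg_iff_finiteType.mp hfg
  have : Algebra.IsIntegral R S :=
    ⟨fun x => (isIntegral_algHom_iff S.val Subtype.val_injective).mp (hint x x.2)⟩
  exact Algebra.IsIntegral.finite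

variable {F D : Type*} [Field F] [DivisionRing D] [Algebra F D] (B : Subalgebra F D)

attribute [local instance] TensorProduct.Algebra.module

theorem tmul_op_smul (d x : D) (b : B.op) : (d ⊗ₜ[F] b) • x = d * x * (b : Dᵐᵒᵖ).unop := by
  rw [TensorProduct.Algebra.smul_def, smul_eq_mul, mul_assoc]
  rfl

theorem smul_tensorOp_smul (d : D) (a : D ⊗[F] B.op) (x : D) : (d • a) • x = d * (a • x) := by
  induction a using TensorProduct.induction_on with
  | zero => rw [smul_zero, zero_smul (D ⊗[F] B.op) x, mul_zero]
  | tmul d' b => simp only [smul_tmul', tmul_op_smul, smul_eq_mul, mul_assoc]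
  | add a a' ha ha' => simp only [smul_add, add_smul, ha, ha', mul_add]

instance isSimpleModule_tensorOp : IsSimpleModule (D ⊗[F] B.op) D :=
  isSimpleModule_iff_toSpanSingleton_surjective.mpr ⟨inferInstance, fun x hx y =>
    ⟨(y * x⁻¹) ⊗ₜ 1, by simp [tmul_op_smul, hx]⟩⟩

theorem tensorOp_end_apply (ψ : Module.End (D ⊗[F] B.op) D) (x : D) : ψ x = x * ψ 1 := by
  simpa [tmul_op_smul] using ψ.map_smul (x ⊗ₜ 1) 1

theorem tensorOp_end_apply_one_mem_centralizer (ψ : Module.End (D ⊗[F] B.op) D) :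
    ψ 1 ∈ centralizer F (B : Set D) := by
  rw [mem_centralizer_iff]
  intro b hb
  have h := ψ.map_smul (1 ⊗ₜ (⟨MulOpposite.op b, hb⟩ : B.op)) 1
  simp only [tmul_op_smul, MulOpposite.unop_op, one_mul, mul_one] at h
  rw [← tensorOp_end_apply, h]

def evalTensorOp {ι : Type*} (x : ι → D) : D ⊗[F] B.op →ₗ[D] (ι → D) where
  toFun a i := a • x i
  map_add' a a' := by ext i; exact add_smul a a' (x i)
  map_smul' d a := by ext i; exact smul_tensorOp_smul B d a (x i)

theorem evalTensorOp_surjective {ι : Type*} [Fintype ι] {x : ι → D}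
    (hx : LinearIndependent (Module.End (D ⊗[F] B.op) D) x) :
    Function.Surjective (evalTensorOp B x) := by
  classical
  set K := Module.End (D ⊗[F] B.op) D
  intro y
  obtain ⟨g, hg⟩ := LinearMap.exists_leftInverse_of_injective (K := K)
    (Fintype.linearCombination K x) <| LinearMap.ker_eq_bot.mpr <|
      linearIndependent_iff_injective_fintypeLinearCombination.mp hx
  have hgx : ∀ i, g (x i) = Pi.single i 1 := fun i => by
    simpa using LinearMap.congr_fun hg (Pi.single i 1)
  -- `Fintype.linearCombination K y ∘ₗ g` is a `K`-linear map sending each `x i` to `y i`.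
  obtain ⟨a, ha⟩ := jacobson_density (Fintype.linearCombination K y ∘ₗ g) (Finset.univ.image x)
  refine ⟨a, funext fun i => ?_⟩
  simp [evalTensorOp, ← ha (x i) (Finset.mem_image_of_mem x (Finset.mem_univ i)), hgx]

theorem card_le_finrank_of_linearIndependent [Module.Finite F B] {ι : Type*} [Fintype ι]
    {x : ι → D} (hx : LinearIndependent (Module.End (D ⊗[F] B.op) D) x) :
    Fintype.card ι ≤ Module.finrank D (D ⊗[F] B.op) := by
  have : Module.Finite F B.op := Module.Finite.equiv B.linearEquivOp
  simpa using LinearMap.finrank_le_finrank_of_surjective (evalTensorOp_surjective B hx)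

theorem finite_tensorOp_end [Module.Finite F B] :
    Module.Finite (Module.End (D ⊗[F] B.op) D) D := by
  classical
  -- Schur's division ring structure is not found through the ring instance of the tensor product.
  let _ : DivisionRing (Module.End (D ⊗[F] B.op) D) := Module.End.instDivisionRing
  rw [← Module.rank_lt_aleph0_iff]
  refine (rank_le (n := Module.finrank D (D ⊗[F] B.op)) fun s hs => ?_).trans_lt
    Cardinal.natCast_lt_aleph0
  simpa using card_le_finrank_of_linearIndependent B hs

theorem finiteDimensional_of_finiteDimensional_centralizer [FiniteDimensional F B]
    [FiniteDimensional F (centralizer F (B : Set D))] : FiniteDimensional F D := by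
  have := finite_tensorOp_end B
  obtain ⟨n, x, hx⟩ := Module.Finite.exists_fin (R := Module.End (D ⊗[F] B.op) D) (M := D)
  set C := centralizer F (B : Set D)
  let f : (Fin n → C) →ₗ[F] D :=
    ∑ i, LinearMap.mulLeft F (x i) ∘ₗ C.val.toLinearMap ∘ₗ LinearMap.proj i
  refine Module.Finite.of_surjective f fun y => ?_
  obtain ⟨φ, rfl⟩ :=
    (Submodule.mem_span_range_iff_exists_fun _).mp (hx ▸ Submodule.mem_top (x := y))
  refine ⟨fun i => ⟨φ i 1, tensorOp_end_apply_one_mem_centralizer B (φ i)⟩, ?_⟩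
  simp [f, tensorOp_end_apply B (φ _) (x _)]

end Subalgebra

theorem stmt_18_general (F : Type*) [Field F] (D : Type*) [DivisionRing D] [Algebra F D]
    (halg : ∀ d : D, IsAlgebraic F d)
    (E : Subalgebra F D)
    (hEcomm : ∀ x ∈ E, ∀ y ∈ E, x * y = y * x)
    (hEmax : ∀ E' : Subalgebra F D, (∀ x ∈ E', ∀ y ∈ E', x * y = y * x) →
      (∀ x ∈ E', x⁻¹ ∈ E') → E ≤ E' → E' = E)
    (hfg : ∃ s : Finset D, ↑s ⊆ (E : Set D) ∧
      ∀ E' : Subalgebra F D, (∀ x ∈ E', x⁻¹ ∈ E') → ↑s ⊆ (E' : Set D) → E ≤ E') :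
    FiniteDimensional F D := by
  have hint : ∀ d : D, IsIntegral F d := fun d => (halg d).isIntegral
  have hinv : ∀ E' : Subalgebra F D, ∀ x ∈ E', x⁻¹ ∈ E' := fun _ x hx => (hint x).inv_mem hx
  obtain ⟨s, hsE, hsmin⟩ := hfg
  have hE : Algebra.adjoin F (s : Set D) = E :=
    le_antisymm (Algebra.adjoin_le hsE) (hsmin _ (hinv _) Algebra.subset_adjoin)
  have : IsMulCommutative E := .of_setLike_mul_comm hEcomm
  have : FiniteDimensional F E := E.finite_of_fg_of_isIntegral ⟨s, hE⟩ fun x _ => hint x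
  have hC : Subalgebra.centralizer F (E : Set D) = E :=
    Subalgebra.centralizer_eq_self_of_maximal_commutative hEcomm
      fun E' hcomm hle => hEmax E' hcomm (hinv E') hle
  have : FiniteDimensional F (Subalgebra.centralizer F (E : Set D)) := by rwa [hC]
  exact E.finiteDimensional_of_finiteDimensional_centralizer

/-- Let `D` be a division algebra over a field `F` such that every element of
`D` is algebraic over `F`, and suppose `D` contains a maximal subfield `E` (a commutative,
inverse-closed subalgebra, maximal among such) which is a finitely generated field
extension of `F` (it is the smallest inverse-closed subalgebra containing some finite set).
Then `D` is finite-dimensional over `F`. -/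
theorem stmt_18 (F : Type*) [Field F] (D : Type*) [DivisionRing D] [Algebra F D]
    (halg : ∀ d : D, IsAlgebraic F d)
    (E : Subalgebra F D)
    (hEcomm : ∀ x ∈ E, ∀ y ∈ E, x * y = y * x)
    (hEinv : ∀ x ∈ E, x⁻¹ ∈ E)
    (hEmax : ∀ E' : Subalgebra F D, (∀ x ∈ E', ∀ y ∈ E', x * y = y * x) →
      (∀ x ∈ E', x⁻¹ ∈ E') → E ≤ E' → E' = E)
    (hfg : ∃ s : Finset D, ↑s ⊆ (E : Set D) ∧
      ∀ E' : Subalgebra F D, (∀ x ∈ E', x⁻¹ ∈ E') → ↑s ⊆ (E' : Set D) → E ≤ E') :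
    FiniteDimensional F D :=
  stmt_18_general F D halg E hEcomm hEmax hfg
end

section
/- Let F be a field, A a commutative F-algebra generated as an algebra by finitely many elements, and S a simple A-module. Then every element of End_A(S) is algebraic over F and End_A(S) is finite-dimensional over F. -/
/-!
Since `A` is commutative and `S` is cyclic, every `A`-endomorphism of `S` is multiplication by
some `a ∈ A`, so `End_A S` is a quotient of `A`: commutative, and a division ring by Schur's lemma,
hence a field which is a finitely generated `F`-algebra. Zariski's lemma makes it finite over `F`.
-/

open Module

theorem Module.IsPrincipal.algebraMap_end_surjective {A M : Type*} [CommSemiring A]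
    [AddCommMonoid M] [Module A M] [IsPrincipal A M] :
    Function.Surjective (algebraMap A (End A M)) := by
  intro f
  obtain ⟨x, hx⟩ := Submodule.IsPrincipal.principal (⊤ : Submodule A M)
  have mem_span (y : M) : y ∈ Submodule.span A {x} := hx ▸ Submodule.mem_top
  obtain ⟨a, ha⟩ := Submodule.mem_span_singleton.mp (mem_span (f x))
  refine ⟨a, LinearMap.ext fun y => ?_⟩
  obtain ⟨b, rfl⟩ := Submodule.mem_span_singleton.mp (mem_span y)
  rw [Module.algebraMap_end_apply, map_smul, ← ha, smul_comm]

theorem Module.End.isField_of_isSimpleModule {A M : Type*} [CommRing A] [AddCommGroup M]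
    [Module A M] [IsSimpleModule A M] : IsField (End A M) := by
  classical
  have hsurj := IsPrincipal.algebraMap_end_surjective (A := A) (M := M)
  exact
    { exists_pair_ne := exists_pair_ne _
      mul_comm := hsurj.forall₂.2 fun a b => by rw [← map_mul, mul_comm, map_mul]
      mul_inv_cancel := fun hf => ⟨_, mul_inv_cancel₀ hf⟩ }

/-- Let `A` be a finitely generated commutative algebra over a field `F` and
`S` a simple `A`-module. Then every element of `End_A S` is algebraic over `F`, and
`End_A S` is finite-dimensional over `F`. -/
theorem stmt_19 (F : Type*) [Field F] (A : Type*) [CommRing A] [Algebra F A]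
    (hfg : Algebra.FiniteType F A)
    (S : Type*) [AddCommGroup S] [Module A S] [Module F S] [IsScalarTower F A S]
    [IsSimpleModule A S] :
    (∀ f : Module.End A S, IsAlgebraic F f) ∧ FiniteDimensional F (Module.End A S) := by
  let _ : Field (End A S) := End.isField_of_isSimpleModule.toField
  have : Algebra.FiniteType F (End A S) :=
    hfg.of_surjective (Algebra.lsmul F A S) IsPrincipal.algebraMap_end_surjective
  have : FiniteDimensional F (End A S) := finite_of_finite_type_of_isJacobsonRing F (End A S)
  exact ⟨Algebra.IsAlgebraic.isAlgebraic, this⟩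
end
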